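/- arXiv:1911.11347 — 2 statements merged into one kernel-verified Lean document; each statement's English description precedes it below -/
import Mathlib

section
/- Let A be a real n×n matrix, B a real n×p matrix, u : ℝ → ℝᵖ, and let ξ, ξ̃ : ℝ → ℝⁿ be differentiable functions satisfying ξ'(t) = Aξ(t) + Bu(t) and ξ̃'(t) = Aξ̃(t) + Bu(t) for all t. Let M be a real symmetric positive definite n×n matrix and μ ∈ ℝ with AᵀM + MA + μM ⪯ 0. Then the function t ↦ (ξ(t) − ξ̃(t))ᵀ M (ξ(t) − ξ̃(t)) e^{μt} is monotone nonincreasing on ℝ. -/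
/-! The input cancels in the difference `e = ξ - η`, which solves `e' = A e`. Along such a
solution the derivative of `(eᵀ M e) e^{μt}` is `e^{μt} eᵀ (AᵀM + MA + μM) e ≤ 0`. -/

open Matrix

section

variable {𝕜 ι : Type*} [NontriviallyNormedField 𝕜] [Fintype ι]

theorem HasDerivAt.dotProduct {f g : 𝕜 → ι → 𝕜} {f' g' : ι → 𝕜} {t : 𝕜}
    (hf : HasDerivAt f f' t) (hg : HasDerivAt g g' t) :
    HasDerivAt (fun s => f s ⬝ᵥ g s) (f' ⬝ᵥ g t + f t ⬝ᵥ g') t :=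
  (HasDerivAt.fun_sum fun i _ => (hasDerivAt_pi.1 hf i).mul (hasDerivAt_pi.1 hg i)).congr_deriv
    Finset.sum_add_distrib

theorem HasDerivAt.mulVec {m : Type*} [Fintype m] {g : 𝕜 → ι → 𝕜} {g' : ι → 𝕜} {t : 𝕜}
    (M : Matrix m ι 𝕜) (hg : HasDerivAt g g' t) :
    HasDerivAt (fun s => M *ᵥ g s) (M *ᵥ g') t :=
  hasDerivAt_pi.2 fun i => ((hasDerivAt_const t (M i)).dotProduct hg).congr_deriv <| by
    rw [zero_dotProduct, zero_add]
    rfl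

end

theorem dotProduct_mulVec_transpose_mul_add_mul_add_smul {ι R : Type*} [Fintype ι]
    [CommRing R] (A M : Matrix ι ι R) (μ : R) (v : ι → R) :
    v ⬝ᵥ (Aᵀ * M + M * A + μ • M) *ᵥ v
      = A *ᵥ v ⬝ᵥ M *ᵥ v + v ⬝ᵥ M *ᵥ (A *ᵥ v) + μ * (v ⬝ᵥ M *ᵥ v) := by
  rw [add_mulVec, add_mulVec, smul_mulVec, ← mulVec_mulVec, ← mulVec_mulVec, dotProduct_add,
    dotProduct_add, dotProduct_smul, dotProduct_mulVec v Aᵀ, vecMul_transpose, smul_eq_mul]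

theorem antitone_dotProduct_mulVec_mul_exp {ι : Type*} [Fintype ι] (A M : Matrix ι ι ℝ) (μ : ℝ)
    (hLMI : ∀ v : ι → ℝ, v ⬝ᵥ (Aᵀ * M + M * A + μ • M) *ᵥ v ≤ 0) {e : ℝ → ι → ℝ}
    (he : ∀ t, HasDerivAt e (A *ᵥ e t) t) :
    Antitone fun t => (e t ⬝ᵥ M *ᵥ e t) * Real.exp (μ * t) := by
  have hV : ∀ t, HasDerivAt (fun s => (e s ⬝ᵥ M *ᵥ e s) * Real.exp (μ * s))
      ((e t ⬝ᵥ (Aᵀ * M + M * A + μ • M) *ᵥ e t) * Real.exp (μ * t)) t := fun t => by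
    have hexp : HasDerivAt (fun s => Real.exp (μ * s)) (Real.exp (μ * t) * μ) t := by
      simpa using ((hasDerivAt_id t).const_mul μ).exp
    refine (((he t).dotProduct ((he t).mulVec M)).mul hexp).congr_deriv ?_
    rw [dotProduct_mulVec_transpose_mul_add_mul_add_smul]
    ring
  refine antitone_of_deriv_nonpos (fun t => (hV t).differentiableAt) fun t => ?_
  rw [(hV t).deriv]
  exact mul_nonpos_of_nonpos_of_nonneg (hLMI _) (Real.exp_nonneg _)

theorem stmt_3_general {n p : ℕ} (A : Matrix (Fin n) (Fin n) ℝ) (B : Matrix (Fin n) (Fin p) ℝ)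
    (u : ℝ → Fin p → ℝ) (ξ η : ℝ → Fin n → ℝ)
    (hξ : ∀ t : ℝ, HasDerivAt ξ (A.mulVec (ξ t) + B.mulVec (u t)) t)
    (hη : ∀ t : ℝ, HasDerivAt η (A.mulVec (η t) + B.mulVec (u t)) t)
    (M : Matrix (Fin n) (Fin n) ℝ) (μ : ℝ)
    (hLMI : ∀ v : Fin n → ℝ, v ⬝ᵥ (Aᵀ * M + M * A + μ • M).mulVec v ≤ 0) :
    Antitone (fun t : ℝ => ((ξ t - η t) ⬝ᵥ M.mulVec (ξ t - η t)) * Real.exp (μ * t)) := by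
  refine antitone_dotProduct_mulVec_mul_exp A M μ hLMI fun t => ?_
  refine ((hξ t).sub (hη t)).congr_deriv ?_
  rw [mulVec_sub]
  abel

/-- Under the LMI AᵀM + MA + μM ⪯ 0, the function
t ↦ (ξ(t) − η(t))ᵀ M (ξ(t) − η(t)) e^{μt} is monotone nonincreasing on ℝ. -/
theorem stmt_3 {n p : ℕ} (A : Matrix (Fin n) (Fin n) ℝ) (B : Matrix (Fin n) (Fin p) ℝ)
    (u : ℝ → Fin p → ℝ) (ξ η : ℝ → Fin n → ℝ)
    (hξ : ∀ t : ℝ, HasDerivAt ξ (A.mulVec (ξ t) + B.mulVec (u t)) t)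
    (hη : ∀ t : ℝ, HasDerivAt η (A.mulVec (η t) + B.mulVec (u t)) t)
    (M : Matrix (Fin n) (Fin n) ℝ) (hMsym : M = Mᵀ)
    (hMpd : ∀ v : Fin n → ℝ, v ≠ 0 → 0 < v ⬝ᵥ M.mulVec v) (μ : ℝ)
    (hLMI : ∀ v : Fin n → ℝ, v ⬝ᵥ (Aᵀ * M + M * A + μ • M).mulVec v ≤ 0) :
    Antitone (fun t : ℝ => ((ξ t - η t) ⬝ᵥ M.mulVec (ξ t - η t)) * Real.exp (μ * t)) :=
  stmt_3_general A B u ξ η hξ hη M μ hLMI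
end

section
/- Let A be a real n×n matrix, B a real n×p matrix, u : ℝ → ℝᵖ, and let ξ, ξ̃ : ℝ → ℝⁿ be differentiable functions satisfying ξ'(t) = Aξ(t) + Bu(t) and ξ̃'(t) = Aξ̃(t) + Bu(t) for all t. Let M be a real symmetric positive definite n×n matrix and μ ∈ ℝ with AᵀM + MA + μM ⪯ 0, and suppose (ξ(0) − ξ̃(0))ᵀ M (ξ(0) − ξ̃(0)) ≤ r for some r ≥ 0. Let a ∈ ℝⁿ and z > 0 satisfy z² a aᵀ ⪯ M. Then for all t ≥ 0: −(√r) e^{−μt/2} / z ≤ aᵀ(ξ̃(t) − ξ(t)) ≤ (√r) e^{−μt/2} / z. -/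
/-!
Along the difference `δ = η - ξ`, which solves `δ' = A δ`, the Lyapunov function
`V = δᵀ M δ` satisfies `V' = δᵀ (AᵀM + MA) δ ≤ -μ V` by the LMI, so Grönwall gives
`V t ≤ r e^{-μt}`. The rank-one domination `z² a aᵀ ⪯ M` then turns this into
`z² (aᵀδ)² ≤ V t`, and taking square roots yields the bound.
-/

open Matrix Real

variable {ι : Type*} [Fintype ι]

theorem hasDerivAt_dotProduct_mulVec_self (M : Matrix ι ι ℝ) {δ : ℝ → ι → ℝ} {d : ι → ℝ}
    {t : ℝ} (h : HasDerivAt δ d t) :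
    HasDerivAt (fun s => δ s ⬝ᵥ M *ᵥ δ s) (d ⬝ᵥ M *ᵥ δ t + δ t ⬝ᵥ M *ᵥ d) t := by
  have hδ : ∀ i, HasDerivAt (fun s => δ s i) (d i) t := hasDerivAt_pi.mp h
  have hMδ : ∀ i, HasDerivAt (fun s => (M *ᵥ δ s) i) ((M *ᵥ d) i) t := fun i =>
    HasDerivAt.fun_sum fun j _ => (hδ j).const_mul (M i j)
  exact (HasDerivAt.fun_sum fun i _ => (hδ i).fun_mul (hMδ i)).congr_deriv
    (by simp [dotProduct, Finset.sum_add_distrib])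

theorem dotProduct_transpose_mul_add_mul_mulVec (A M : Matrix ι ι ℝ) (x : ι → ℝ) :
    x ⬝ᵥ (Aᵀ * M + M * A) *ᵥ x = A *ᵥ x ⬝ᵥ M *ᵥ x + x ⬝ᵥ M *ᵥ (A *ᵥ x) := by
  rw [add_mulVec, dotProduct_add, ← mulVec_mulVec, ← mulVec_mulVec, dotProduct_mulVec,
    vecMul_transpose]

theorem dotProduct_vecMulVec_self_mulVec (a v : ι → ℝ) :
    v ⬝ᵥ vecMulVec a a *ᵥ v = (a ⬝ᵥ v) ^ 2 := by
  rw [vecMulVec_mulVec]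
  simp [dotProduct_comm v a, sq]

theorem dotProduct_mulVec_le_mul_exp {A M : Matrix ι ι ℝ} {μ : ℝ}
    (hLMI : ∀ v : ι → ℝ, v ⬝ᵥ (Aᵀ * M + M * A + μ • M) *ᵥ v ≤ 0)
    {δ : ℝ → ι → ℝ} (hδ : ∀ t, HasDerivAt δ (A *ᵥ δ t) t) {t : ℝ} (ht : 0 ≤ t) :
    δ t ⬝ᵥ M *ᵥ δ t ≤ δ 0 ⬝ᵥ M *ᵥ δ 0 * exp (-μ * t) := by
  have hV := fun s => hasDerivAt_dotProduct_mulVec_self M (hδ s)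
  have hV' : ∀ s, A *ᵥ δ s ⬝ᵥ M *ᵥ δ s + δ s ⬝ᵥ M *ᵥ (A *ᵥ δ s) ≤ -μ * (δ s ⬝ᵥ M *ᵥ δ s) := by
    intro s
    have h := hLMI (δ s)
    rw [add_mulVec, dotProduct_add, dotProduct_transpose_mul_add_mul_mulVec, smul_mulVec,
      dotProduct_smul, smul_eq_mul] at h
    linarith
  have hgronwall := le_gronwallBound_of_liminf_deriv_right_le (ε := 0)
    (fun s _ => (hV s).continuousAt.continuousWithinAt)
    (fun s _ _ hr => (hV s).hasDerivWithinAt.liminf_right_slope_le hr) le_rfl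
    (fun s _ => (hV' s).trans_eq (add_zero _).symm) t ⟨ht, le_rfl⟩
  rwa [gronwallBound_ε0, sub_zero] at hgronwall

theorem abs_dotProduct_le_sqrt_div {M : Matrix ι ι ℝ} {a : ι → ℝ} {z : ℝ} (hz : 0 < z)
    (hdom : ∀ v : ι → ℝ, 0 ≤ v ⬝ᵥ (M - z ^ 2 • vecMulVec a a) *ᵥ v) (v : ι → ℝ) :
    |a ⬝ᵥ v| ≤ √(v ⬝ᵥ M *ᵥ v) / z := by
  have h := hdom v
  rw [sub_mulVec, dotProduct_sub, smul_mulVec, dotProduct_smul, smul_eq_mul,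
    dotProduct_vecMulVec_self_mulVec] at h
  rw [le_div_iff₀ hz, ← abs_of_pos hz, ← abs_mul]
  exact abs_le_sqrt (by linarith [mul_pow (a ⬝ᵥ v) z 2])

theorem stmt_7_general {n p : ℕ} (A : Matrix (Fin n) (Fin n) ℝ) (B : Matrix (Fin n) (Fin p) ℝ)
    (u : ℝ → Fin p → ℝ) (ξ η : ℝ → Fin n → ℝ)
    (hξ : ∀ t : ℝ, HasDerivAt ξ (A.mulVec (ξ t) + B.mulVec (u t)) t)
    (hη : ∀ t : ℝ, HasDerivAt η (A.mulVec (η t) + B.mulVec (u t)) t)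
    (M : Matrix (Fin n) (Fin n) ℝ) (μ : ℝ)
    (hLMI : ∀ v : Fin n → ℝ, v ⬝ᵥ (Aᵀ * M + M * A + μ • M).mulVec v ≤ 0)
    (r : ℝ)
    (h0 : (ξ 0 - η 0) ⬝ᵥ M.mulVec (ξ 0 - η 0) ≤ r)
    (a : Fin n → ℝ) (z : ℝ) (hz : 0 < z)
    (hdom : ∀ v : Fin n → ℝ, 0 ≤ v ⬝ᵥ (M - z ^ 2 • vecMulVec a a).mulVec v) :
    ∀ t : ℝ, 0 ≤ t →
      -(Real.sqrt r * Real.exp (-μ * t / 2) / z) ≤ a ⬝ᵥ (η t - ξ t) ∧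
        a ⬝ᵥ (η t - ξ t) ≤ Real.sqrt r * Real.exp (-μ * t / 2) / z := by
  intro t ht
  have hδ : ∀ s, HasDerivAt (η - ξ) (A *ᵥ (η s - ξ s)) s := fun s => by
    simpa only [add_sub_add_right_eq_sub, ← mulVec_sub] using (hη s).sub (hξ s)
  have hV0 : (η 0 - ξ 0) ⬝ᵥ M *ᵥ (η 0 - ξ 0) ≤ r := by
    rwa [← neg_sub, mulVec_neg, dotProduct_neg, neg_dotProduct, neg_neg]
  have hVt := dotProduct_mulVec_le_mul_exp hLMI hδ ht
  rw [← abs_le]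
  calc |a ⬝ᵥ (η t - ξ t)| ≤ √((η t - ξ t) ⬝ᵥ M *ᵥ (η t - ξ t)) / z :=
        abs_dotProduct_le_sqrt_div hz hdom _
    _ ≤ √(r * exp (-μ * t)) / z := by gcongr; exact hVt.trans (by gcongr; exact hV0)
    _ = √r * exp (-μ * t / 2) / z := by rw [sqrt_mul' _ (exp_pos _).le, exp_half]

/-- Combining the ellipsoid decay bound with the rank-one domination z² a aᵀ ⪯ M gives the
linear-functional bound |aᵀ(η(t) − ξ(t))| ≤ √r e^{−μt/2} / z for all t ≥ 0. -/
theorem stmt_7 {n p : ℕ} (A : Matrix (Fin n) (Fin n) ℝ) (B : Matrix (Fin n) (Fin p) ℝ)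
    (u : ℝ → Fin p → ℝ) (ξ η : ℝ → Fin n → ℝ)
    (hξ : ∀ t : ℝ, HasDerivAt ξ (A.mulVec (ξ t) + B.mulVec (u t)) t)
    (hη : ∀ t : ℝ, HasDerivAt η (A.mulVec (η t) + B.mulVec (u t)) t)
    (M : Matrix (Fin n) (Fin n) ℝ) (hMsym : M = Mᵀ)
    (hMpd : ∀ v : Fin n → ℝ, v ≠ 0 → 0 < v ⬝ᵥ M.mulVec v) (μ : ℝ)
    (hLMI : ∀ v : Fin n → ℝ, v ⬝ᵥ (Aᵀ * M + M * A + μ • M).mulVec v ≤ 0)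
    (r : ℝ) (hr : 0 ≤ r)
    (h0 : (ξ 0 - η 0) ⬝ᵥ M.mulVec (ξ 0 - η 0) ≤ r)
    (a : Fin n → ℝ) (z : ℝ) (hz : 0 < z)
    (hdom : ∀ v : Fin n → ℝ, 0 ≤ v ⬝ᵥ (M - z ^ 2 • vecMulVec a a).mulVec v) :
    ∀ t : ℝ, 0 ≤ t →
      -(Real.sqrt r * Real.exp (-μ * t / 2) / z) ≤ a ⬝ᵥ (η t - ξ t) ∧
        a ⬝ᵥ (η t - ξ t) ≤ Real.sqrt r * Real.exp (-μ * t / 2) / z :=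
  stmt_7_general A B u ξ η hξ hη M μ hLMI r h0 a z hz hdom
end
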